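/- Value restriction implies the Condorcet property: let A be a finite set and D a set of linear orders on A such that for every 3-element subset T of A there exist x ∈ T and a position r ∈ {1,2,3} such that no order in D ranks x in position r among the elements of T. Then D is a Condorcet domain: every profile consisting of an odd number of orders from D has a transitive strict pairwise majority relation. -/

import Mathlib

open Set

/-- `r` is a (strict) linear order: irreflexive, transitive and total. -/
def IsLinOrder {A : Type*} (r : A → A → Prop) : Prop :=
  IsStrictTotalOrder A r

/-- Strict pairwise majority relation of a profile `P` of `m` orders:
`a` is majority-preferred to `b` if more orders in the profile rank `a` above `b`
than rank `b` above `a`. -/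
def MajPrefers {A : Type*} {m : ℕ} (P : Fin m → (A → A → Prop)) (a b : A) : Prop :=
  Nat.card {i : Fin m // P i a b} > Nat.card {i : Fin m // P i b a}

/-- `D` is a Condorcet domain: every profile of an odd number of (not necessarily
distinct) orders from `D` has a transitive strict pairwise majority relation. -/
def IsCondorcet {A : Type*} (D : Set (A → A → Prop)) : Prop :=
  ∀ (m : ℕ) (P : Fin m → (A → A → Prop)), Odd m → (∀ i, P i ∈ D) →
    Transitive (MajPrefers P)

/-- `D` is a maximal Condorcet domain: it is Condorcet, and no set of linear
orders strictly containing it is Condorcet. -/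
def IsMaximalCondorcet {A : Type*} (D : Set (A → A → Prop)) : Prop :=
  IsCondorcet D ∧
    ∀ D' : Set (A → A → Prop), (∀ r ∈ D', IsLinOrder r) → D ⊂ D' → ¬ IsCondorcet D'

/-- Never-top condition for `x` on the triple `T`: no order in `D` ranks `x`
above both other elements of `T`. -/
def NeverTop {A : Type*} (D : Set (A → A → Prop)) (T : Finset A) (x : A) : Prop :=
  ∀ p ∈ D, ¬ (∀ y ∈ T, y ≠ x → p x y)

/-- Never-bottom condition for `x` on the triple `T`: no order in `D` ranks `x`
below both other elements of `T`. -/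
def NeverBottom {A : Type*} (D : Set (A → A → Prop)) (T : Finset A) (x : A) : Prop :=
  ∀ p ∈ D, ¬ (∀ y ∈ T, y ≠ x → p y x)

/-- Never-middle condition for `x` on the triple `T`: no order in `D` ranks `x`
between the two other elements of `T`. -/
def NeverMiddle {A : Type*} (D : Set (A → A → Prop)) (T : Finset A) (x : A) : Prop :=
  ∀ p ∈ D, ¬ (∃ y ∈ T, ∃ z ∈ T, y ≠ x ∧ z ≠ x ∧ p y x ∧ p x z)

/-- `D` is peak-pit: every triple has an alternative that is never-top or never-bottom. -/
def IsPeakPit {A : Type*} (D : Set (A → A → Prop)) : Prop :=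
  ∀ T : Finset A, T.card = 3 → ∃ x ∈ T, NeverTop D T x ∨ NeverBottom D T x

/-- `D` is Arrow's single-peaked: every triple has a never-bottom alternative. -/
def IsArrowSP {A : Type*} (D : Set (A → A → Prop)) : Prop :=
  ∀ T : Finset A, T.card = 3 → ∃ x ∈ T, NeverBottom D T x

/-- `D` has maximal width: it contains two completely reversed linear orders. -/
def HasMaximalWidth {A : Type*} (D : Set (A → A → Prop)) : Prop :=
  ∃ p ∈ D, (fun a b => p b a) ∈ D

/-- A generalised arrangement of `n` pseudolines: continuous functions on `[0,1]`,
starting (at `0`) in strictly decreasing order of index, ending (at `1`) at pairwise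
distinct values; every two of them intersect in a finite set of interior points, at
each of which their difference changes sign; and no three share a common point. -/
structure GenArrangement (n : ℕ) where
  line : Fin n → ℝ → ℝ
  continuous : ∀ i, ContinuousOn (line i) (Set.Icc (0:ℝ) 1)
  start_anti : ∀ i j : Fin n, i < j → line j 0 < line i 0
  end_distinct : ∀ i j : Fin n, i ≠ j → line i 1 ≠ line j 1
  inter_finite : ∀ i j : Fin n, i ≠ j →
    {x : ℝ | x ∈ Set.Ioo (0:ℝ) 1 ∧ line i x = line j x}.Finite
  sign_change : ∀ i j : Fin n, i ≠ j → ∀ x ∈ Set.Ioo (0:ℝ) 1, line i x = line j x →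
    ∃ ε > 0, Set.Ioo (x - ε) (x + ε) ⊆ Set.Ioo (0:ℝ) 1 ∧
      ∀ y ∈ Set.Ioo (x - ε) x, ∀ z ∈ Set.Ioo x (x + ε),
        (line i y - line j y) * (line i z - line j z) < 0
  no_triple : ∀ i j k : Fin n, i ≠ j → j ≠ k → i ≠ k → ∀ x ∈ Set.Icc (0:ℝ) 1,
    ¬ (line i x = line j x ∧ line j x = line k x)

namespace GenArrangement

/-- The set `Z(i,j)` of interior intersection points of pseudolines `i` and `j`. -/
def Z {n : ℕ} (g : GenArrangement n) (i j : Fin n) : Set ℝ :=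
  {x : ℝ | x ∈ Set.Ioo (0:ℝ) 1 ∧ g.line i x = g.line j x}

/-- The level of an intersection point `x ∈ Z(i,j)`: the number of indices
`k ∉ {i,j}` with `f k x > f i x`. -/
noncomputable def level {n : ℕ} (g : GenArrangement n) (i j : Fin n) (x : ℝ) : ℕ :=
  Nat.card {k : Fin n // k ≠ i ∧ k ≠ j ∧ g.line i x < g.line k x}

/-- `g` is tame: for every pair of pseudolines, all their intersection points
are at the same level. -/
def Tame {n : ℕ} (g : GenArrangement n) : Prop :=
  ∀ i j : Fin n, i ≠ j → ∀ x₁ ∈ g.Z i j, ∀ x₂ ∈ g.Z i j,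
    g.level i j x₁ = g.level i j x₂

/-- `g` is a classical (simple) arrangement: every two pseudolines cross exactly once. -/
def IsClassical {n : ℕ} (g : GenArrangement n) : Prop :=
  ∀ i j : Fin n, i ≠ j → ∃ x : ℝ, g.Z i j = {x}

/-- `S` is a chamber set of `g`: for some `x ∈ [0,1]` and level `y` avoiding all
the lines, `S` is the set of lines passing above the point `(x, y)`. -/
def IsChamberSet {n : ℕ} (g : GenArrangement n) (S : Set (Fin n)) : Prop :=
  ∃ x ∈ Set.Icc (0:ℝ) 1, ∃ y : ℝ, (∀ i, g.line i x ≠ y) ∧ S = {i : Fin n | y < g.line i x}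

/-- The domain `D(g)`: all linear orders on `Fin n` all of whose prefix sets
(equivalently, all of whose upward closed sets) are chamber sets of `g`. -/
def domain {n : ℕ} (g : GenArrangement n) : Set (Fin n → Fin n → Prop) :=
  {r | IsLinOrder r ∧
    ∀ S : Set (Fin n), (∀ a ∈ S, ∀ b, r b a → b ∈ S) → g.IsChamberSet S}

end GenArrangement

/-- `t` is the top element of the order `p`. -/
def IsTopOf {A : Type*} (p : A → A → Prop) (t : A) : Prop :=
  ∀ y, y ≠ t → p t y

/-- `p` is single-peaked with respect to the axis `ax`: whenever `a` lies strictly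
between `b` and the top of `p` on the axis, `p` ranks `a` above `b`. -/
def SinglePeakedWRT {A : Type*} (ax p : A → A → Prop) : Prop :=
  ∀ t, IsTopOf p t → ∀ a b, ((ax b a ∧ ax a t) ∨ (ax t a ∧ ax a b)) → p a b

/-- The linear order determined by a list, ranking `a` above `b` iff `a` occurs
earlier in the list. -/
def ofList {A : Type*} [DecidableEq A] (l : List A) (a b : A) : Prop :=
  l.idxOf a < l.idxOf b

/-- The domain `D_{4,2}` of eight linear orders on `{1,2,3,4}` (represented as
`Fin 4`, with alternative `i+1` encoded as `i`): 1234, 2134, 2314, 3214, 2341,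
3241, 2431, 4231. -/
def D42 : Set (Fin 4 → Fin 4 → Prop) :=
  {ofList [0,1,2,3], ofList [1,0,2,3], ofList [1,2,0,3], ofList [2,1,0,3],
   ofList [1,2,3,0], ofList [2,1,3,0], ofList [1,3,2,0], ofList [3,1,2,0]}

/-- The domain `D_{3,1}` of four linear orders on `{1,2,3}` (represented as `Fin 3`,
with alternative `i+1` encoded as `i`): 123, 213, 231, 321. -/
def D31 : Set (Fin 3 → Fin 3 → Prop) :=
  {ofList [0,1,2], ofList [1,0,2], ofList [1,2,0], ofList [2,1,0]}

/-! In a majority cycle `a → b → c → a` each two of the three majorities overlap, since each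
is held by more than half of the (odd number of) voters. The overlaps are voters with
rankings `abc`, `bca` and `cab`, so every alternative of the triple is ranked top, middle
and bottom by someone, and no alternative of `{a, b, c}` is value restricted. -/

open Finset

lemma rel_swap_iff_not {A : Type*} {r : A → A → Prop} [IsStrictTotalOrder A r] {a b : A}
    (hab : a ≠ b) : r b a ↔ ¬ r a b :=
  ⟨asymm, fun h => ((trichotomous_of r a b).resolve_left h).resolve_left hab⟩

lemma Fintype.exists_and_of_card_lt_card_add_card {ι : Type*} [Fintype ι] {p q : ι → Prop}
    (h : Fintype.card ι < Nat.card {i // p i} + Nat.card {i // q i}) : ∃ i, p i ∧ q i := by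
  classical
  rw [Nat.card_eq_fintype_card, Nat.card_eq_fintype_card, Fintype.card_subtype,
    Fintype.card_subtype] at h
  obtain ⟨i, hi⟩ := inter_nonempty_of_card_lt_card_add_card (subset_univ _) (subset_univ _) h
  exact ⟨i, by simpa using hi⟩

section Majority

variable {A : Type*} {m : ℕ} {P : Fin m → A → A → Prop} {a b c : A}

lemma card_prefers_add_card_prefers (hP : ∀ i, IsStrictTotalOrder A (P i)) (hab : a ≠ b) :
    Nat.card {i // P i a b} + Nat.card {i // P i b a} = m := by
  classical
  rw [Nat.card_congr (Equiv.subtypeEquivRight fun i => @rel_swap_iff_not _ _ (hP i) _ _ hab)]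
  simp only [Nat.card_eq_fintype_card, Fintype.card_subtype_compl, Fintype.card_fin]
  have := Fintype.card_subtype_le fun i => P i a b
  rw [Fintype.card_fin] at this
  omega

lemma MajPrefers.ne (h : MajPrefers P a b) : a ≠ b := by
  rintro rfl
  exact lt_irrefl _ h

lemma majPrefers_swap_of_not_majPrefers (hP : ∀ i, IsStrictTotalOrder A (P i)) (hm : Odd m)
    (hab : a ≠ b) (h : ¬ MajPrefers P a b) : MajPrefers P b a := by
  have hsum := card_prefers_add_card_prefers hP hab
  obtain ⟨k, rfl⟩ := hm
  unfold MajPrefers at h ⊢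
  omega

lemma MajPrefers.exists_rel_and_rel (hP : ∀ i, IsStrictTotalOrder A (P i))
    (hab : MajPrefers P a b) (hbc : MajPrefers P b c) : ∃ i, P i a b ∧ P i b c := by
  apply Fintype.exists_and_of_card_lt_card_add_card
  have h₁ := card_prefers_add_card_prefers hP hab.ne
  have h₂ := card_prefers_add_card_prefers hP hbc.ne
  unfold MajPrefers at hab hbc
  rw [Fintype.card_fin]
  omega

variable [DecidableEq A] {D : Set (A → A → Prop)}

lemma not_valueRestricted_head_of_majPrefers_cycle (hP : ∀ i, IsStrictTotalOrder A (P i))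
    (hPD : ∀ i, P i ∈ D) (hab : MajPrefers P a b) (hbc : MajPrefers P b c)
    (hca : MajPrefers P c a) :
    ¬ (NeverTop D {a, b, c} a ∨ NeverMiddle D {a, b, c} a ∨ NeverBottom D {a, b, c} a) := by
  have hT : ∀ {y}, y ∈ ({a, b, c} : Finset A) → y ≠ a → y = b ∨ y = c := by
    intro y hy hya
    simpa [hya] using hy
  rintro (hnt | hnm | hnb)
  · obtain ⟨i, hiab, hibc⟩ := hab.exists_rel_and_rel hP hbc
    have := hP i
    refine hnt _ (hPD i) fun y hy hya => ?_
    rcases hT hy hya with rfl | rfl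
    exacts [hiab, _root_.trans hiab hibc]
  · obtain ⟨i, hica, hiab⟩ := hca.exists_rel_and_rel hP hab
    exact hnm _ (hPD i) ⟨c, by simp, b, by simp, hca.ne, hab.ne.symm, hica, hiab⟩
  · obtain ⟨i, hibc, hica⟩ := hbc.exists_rel_and_rel hP hca
    have := hP i
    refine hnb _ (hPD i) fun y hy hya => ?_
    rcases hT hy hya with rfl | rfl
    exacts [_root_.trans hibc hica, hica]

lemma not_valueRestricted_of_majPrefers_cycle (hP : ∀ i, IsStrictTotalOrder A (P i))
    (hPD : ∀ i, P i ∈ D) (hab : MajPrefers P a b) (hbc : MajPrefers P b c)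
    (hca : MajPrefers P c a) : ∀ x ∈ ({a, b, c} : Finset A),
      ¬ (NeverTop D {a, b, c} x ∨ NeverMiddle D {a, b, c} x ∨ NeverBottom D {a, b, c} x) := by
  intro x hx
  simp only [Finset.mem_insert, Finset.mem_singleton] at hx
  rcases hx with rfl | rfl | rfl
  · exact not_valueRestricted_head_of_majPrefers_cycle hP hPD hab hbc hca
  · rw [show ({a, x, c} : Finset A) = {x, c, a} by ext; simp; tauto]
    exact not_valueRestricted_head_of_majPrefers_cycle hP hPD hbc hca hab
  · rw [show ({a, b, x} : Finset A) = {x, a, b} by ext; simp; tauto]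
    exact not_valueRestricted_head_of_majPrefers_cycle hP hPD hca hab hbc

end Majority

theorem valueRestriction_condorcet_general {A : Type*}
    (D : Set (A → A → Prop)) (hD : ∀ r ∈ D, IsLinOrder r)
    (hvr : ∀ T : Finset A, T.card = 3 →
      ∃ x ∈ T, NeverTop D T x ∨ NeverMiddle D T x ∨ NeverBottom D T x) :
    IsCondorcet D := by
  classical
  intro m P hm hPD a b c hab hbc
  have hP : ∀ i, IsStrictTotalOrder A (P i) := fun i => hD _ (hPD i)
  by_contra hac
  have hca : MajPrefers P c a :=
    majPrefers_swap_of_not_majPrefers hP hm (fun h => lt_asymm hab (h ▸ hbc)) hac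
  obtain ⟨x, hx, hxvr⟩ :=
    hvr {a, b, c} (card_eq_three.2 ⟨a, b, c, hab.ne, hca.ne.symm, hbc.ne, rfl⟩)
  exact not_valueRestricted_of_majPrefers_cycle hP hPD hab hbc hca x hx hxvr

/-- value restriction implies the Condorcet property: if every
triple has an alternative that is never in some fixed position (top, middle, or
bottom) of the triple across `D`, then `D` is a Condorcet domain. -/
theorem valueRestriction_condorcet {A : Type*} [Fintype A]
    (D : Set (A → A → Prop)) (hD : ∀ r ∈ D, IsLinOrder r)
    (hvr : ∀ T : Finset A, T.card = 3 →
      ∃ x ∈ T, NeverTop D T x ∨ NeverMiddle D T x ∨ NeverBottom D T x) :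
    IsCondorcet D :=
  valueRestriction_condorcet_general D hD hvr
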